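/- For all IPC formulas A, B, Q, the formula (QA ⊃ B) ⊃ [(QQA ⊃ B) ⊃ QQB], that is ((A ⊃ Q) ⊃ B) ⊃ (((((A ⊃ Q) ⊃ Q) ⊃ B)) ⊃ ((B ⊃ Q) ⊃ Q)), is a theorem of IPC. -/

import Mathlib

/-- IPC formulas: propositional variables and the conditional only. -/
inductive IPCForm : Type
  | var : ℕ → IPCForm
  | imp : IPCForm → IPCForm → IPCForm

infixr:60 (priority := high) " ⊃ " => IPCForm.imp

/-- Hilbert-style IPC derivability from a set of hypotheses. -/
inductive IPCDeriv : Set IPCForm → IPCForm → Prop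
  | hyp {Γ : Set IPCForm} {A : IPCForm} : A ∈ Γ → IPCDeriv Γ A
  | peirce {Γ : Set IPCForm} (A B : IPCForm) : IPCDeriv Γ (((A ⊃ B) ⊃ A) ⊃ A)
  | axK {Γ : Set IPCForm} (A B : IPCForm) : IPCDeriv Γ (A ⊃ (B ⊃ A))
  | axS {Γ : Set IPCForm} (A B C : IPCForm) :
      IPCDeriv Γ ((A ⊃ (B ⊃ C)) ⊃ ((A ⊃ B) ⊃ (A ⊃ C)))
  | mp {Γ : Set IPCForm} {A B : IPCForm} :
      IPCDeriv Γ (A ⊃ B) → IPCDeriv Γ A → IPCDeriv Γ B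

/-- Disjunction defined within IPC: A ∨ B := (A ⊃ B) ⊃ B. -/
def IPCForm.disj (A B : IPCForm) : IPCForm := (A ⊃ B) ⊃ B

/-- Multiple disjunction A₀ ∨ ⋯ ∨ A_N, associated to the left. -/
def IPCForm.bigDisj : (N : ℕ) → (Fin (N + 1) → IPCForm) → IPCForm
  | 0, A => A 0
  | N + 1, A => IPCForm.disj (IPCForm.bigDisj N (fun i => A i.castSucc)) (A (Fin.last (N + 1)))

/-! Assume `QA ⊃ B`, `QQA ⊃ B` and `QB`. Composing the first and the third gives `QQA`, so the
second yields `B`, and then the third yields `Q`. -/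

namespace IPCDeriv

variable {Γ : Set IPCForm}

theorem imp_self (A : IPCForm) : IPCDeriv Γ (A ⊃ A) :=
  .mp (.mp (.axS A (A ⊃ A) A) (.axK A (A ⊃ A))) (.axK A A)

theorem imp_trans {A B C : IPCForm} (hab : IPCDeriv Γ (A ⊃ B)) (hbc : IPCDeriv Γ (B ⊃ C)) :
    IPCDeriv Γ (A ⊃ C) :=
  .mp (.mp (.axS A B C) (.mp (.axK _ A) hbc)) hab

theorem deduction {A B : IPCForm} (h : IPCDeriv (insert A Γ) B) : IPCDeriv Γ (A ⊃ B) := by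
  generalize hΔ : insert A Γ = Δ at h
  induction h with
  | @hyp C hC =>
    subst hΔ
    rcases hC with rfl | hC
    · exact imp_self C
    · exact .mp (.axK C A) (.hyp hC)
  | peirce C D => exact .mp (.axK _ A) (.peirce C D)
  | axK C D => exact .mp (.axK _ A) (.axK C D)
  | axS C D E => exact .mp (.axK _ A) (.axS C D E)
  | mp _ _ ihAB ihA => exact .mp (.mp (.axS A _ _) ihAB) ihA

end IPCDeriv

theorem ipc_case_split (A B Q : IPCForm) :
    IPCDeriv ∅ ((((A ⊃ Q) ⊃ B) ⊃ (((((A ⊃ Q) ⊃ Q) ⊃ B)) ⊃ ((B ⊃ Q) ⊃ Q)))) := by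
  refine .deduction <| .deduction <| .deduction ?_
  set Γ : Set IPCForm := insert (B ⊃ Q) (insert (((A ⊃ Q) ⊃ Q) ⊃ B) (insert ((A ⊃ Q) ⊃ B) ∅))
  have hQA : IPCDeriv Γ ((A ⊃ Q) ⊃ B) := .hyp (by simp [Γ])
  have hQQA : IPCDeriv Γ (((A ⊃ Q) ⊃ Q) ⊃ B) := .hyp (by simp [Γ])
  have hQB : IPCDeriv Γ (B ⊃ Q) := .hyp (by simp [Γ])
  exact .mp hQB (.mp hQQA (hQA.imp_trans hQB))
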